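/- Let H and H' be terminal graphs with H ∼_P H' and X_H = X_{H'}, and let X be any ordered vertex set of the appropriate boundary size. Then H ⊕_T X ∼_P H' ⊕_T X. -/

import Mathlib

/-- A plain graph: vertex set and edge set (over an ambient vertex type). -/
structure PGraph (V : Type) where
  verts : Set V
  edges : Set (Sym2 V)

/-- A terminal graph: graph together with an ordered list of terminals. -/
structure TermGraph (V : Type) where
  verts : Set V
  edges : Set (Sym2 V)
  terms : List V

variable {V : Type} [DecidableEq V]

/-- The map renaming the `i`-th terminal of `K` to the `i`-th terminal of `G`
(used to identify corresponding terminals when gluing). -/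
def glueMap (G K : TermGraph V) (x : V) : V :=
  if x ∈ K.terms then G.terms.getD (K.terms.idxOf x) x else x

/-- Gluing `G ⊕ K`: disjoint union with corresponding terminals identified
(parallel edges dropped, result is a plain graph). -/
def oplus (G K : TermGraph V) : PGraph V :=
  ⟨G.verts ∪ (glueMap G K) '' K.verts, G.edges ∪ (Sym2.map (glueMap G K)) '' K.edges⟩

/-- Gluing, keeping the terminal list of `G` (a terminal graph version of `⊕`). -/
def oplusTG (G K : TermGraph V) : TermGraph V :=
  ⟨G.verts ∪ (glueMap G K) '' K.verts, G.edges ∪ (Sym2.map (glueMap G K)) '' K.edges, G.terms⟩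

/-- `G ⊕_T X`: add the vertices of `X` and make `X` the new terminal list. -/
def oplusT (G : TermGraph V) (X : List V) : TermGraph V :=
  ⟨G.verts ∪ {x | x ∈ X}, G.edges, X⟩

/-- `G ⊕_▷ H`: union of vertices and edges, keeping the terminals of `G`. -/
def oplusRhd (G H : TermGraph V) : TermGraph V :=
  ⟨G.verts ∪ H.verts, G.edges ∪ H.edges, G.terms⟩

/-- The equivalence `G ∼_P H`: same boundary size, and for every terminal
graph `K` of matching boundary size, `P (G ⊕ K) ↔ P (H ⊕ K)`. -/
def EquivP (P : PGraph V → Prop) (G H : TermGraph V) : Prop :=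
  G.terms.length = H.terms.length ∧
    ∀ K : TermGraph V, K.terms.length = G.terms.length →
      (P (oplus G K) ↔ P (oplus H K))

/-! Gluing `K` onto `H ⊕_T X` is the same as gluing onto `H` the graph `K` attached to `X`,
with terminals `X_H`; since `X_H = X_{H'}`, this one test graph serves for both `H` and `H'`. -/

def gluedOnto (X : List V) (K : TermGraph V) (Y : List V) : TermGraph V :=
  ⟨{x | x ∈ X} ∪ glueMap ⟨∅, ∅, X⟩ K '' K.verts, Sym2.map (glueMap ⟨∅, ∅, X⟩ K) '' K.edges, Y⟩

theorem glueMap_eq_id_of_terms_eq {G K : TermGraph V} (h : K.terms = G.terms) :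
    glueMap G K = id := by
  funext x
  by_cases hx : x ∈ G.terms
  · simp only [glueMap, h, if_pos hx, id,
      List.getD_eq_getElem _ _ (List.idxOf_lt_length_iff.mpr hx), List.getElem_idxOf]
  · simp only [glueMap, h, if_neg hx, id]

theorem oplus_of_terms_eq {G K : TermGraph V} (h : K.terms = G.terms) :
    oplus G K = ⟨G.verts ∪ K.verts, G.edges ∪ K.edges⟩ := by
  simp only [oplus, glueMap_eq_id_of_terms_eq h, Set.image_id, Sym2.map_id]

theorem oplus_oplusT (G K : TermGraph V) (X : List V) :
    oplus (oplusT G X) K = oplus G (gluedOnto X K G.terms) := by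
  rw [oplus_of_terms_eq (G := G) (K := gluedOnto X K G.terms) rfl]
  simp only [oplus, oplusT, gluedOnto, Set.union_assoc]
  -- `glueMap` reads only the terminal list of its first argument
  rfl

theorem oplusT_equivP_general (P : PGraph V → Prop) (H H' : TermGraph V) (X : List V)
    (hHH' : EquivP P H H') (hX : H.terms = H'.terms) :
    EquivP P (oplusT H X) (oplusT H' X) := by
  refine ⟨rfl, fun K _ => ?_⟩
  rw [oplus_oplusT, oplus_oplusT, ← hX]
  exact hHH'.2 _ rfl

/-- if `H ∼_P H'` with `X_H = X_{H'}` and `X` is an ordered vertex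
set of the appropriate boundary size, then `H ⊕_T X ∼_P H' ⊕_T X`. -/
theorem oplusT_equivP (P : PGraph V → Prop) (H H' : TermGraph V) (X : List V)
    (hHH' : EquivP P H H') (hX : H.terms = H'.terms)
    (hlen : X.length = H.terms.length) :
    EquivP P (oplusT H X) (oplusT H' X) :=
  oplusT_equivP_general P H H' X hHH' hX
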